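/- Let K : [0,1] × [0,1] → ℝ be a continuous transition density with K(x,y) ≥ δ > 0 for all x,y and ∫₀¹ K(x,y) dy = 1 for all x. Then there exists a continuous probability density u on [0,1] (u ≥ 0, ∫₀¹ u = 1) such that ∫₀¹ u(x) K(x,y) dx = u(y) for all y, and the n-step densities K_n(x,·) converge uniformly to u, independently of the starting point x. -/

import Mathlib

/-!
Doeblin's argument. Since `K ≥ δ`, two rows `K(x,·)` and `K(x',·)` share the mass `δ`, so
integrating a function `f` against their difference only sees the remaining mass `1 - δ` of each:
`|∫ (K(x,·) - K(x',·)) f| ≤ (1 - δ) · osc f`. Because `K_{n+1}(x,y) = ∫ K(x,z) K_n(z,y) dz`, the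
oscillation of `K_n(·,y)` therefore decays like `(1 - δ)^n`. Moreover `K_{n+k}(x,y)` is an average
of `K_n(·,y)`, so it stays within that oscillation of every `K_n(x',y)`: the iterates converge,
uniformly and at a geometric rate, to a limit `u(y)` that does not depend on the starting point.
The limit inherits continuity, nonnegativity and mass `1` from the `K_n(x₀,·)`, and letting `n → ∞`
in `K_{n+1}(x₀,y) = ∫ K_n(x₀,z) K(z,y) dz` shows that it is invariant.
-/

open MeasureTheory

/-- Iterated kernels: `iterK K n` is the `(n+1)`-st iterated kernel `K_{n+1}`,
so `iterK K 0 = K₁ = K` and `K_{n+2}(x,y) = ∫₀¹ K_{n+1}(x,z) K(z,y) dz`. -/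
noncomputable def iterK (K : ℝ → ℝ → ℝ) : ℕ → ℝ → ℝ → ℝ
  | 0 => K
  | n + 1 => fun x y => ∫ z in (0:ℝ)..1, iterK K n x z * K z y

open Set Filter Topology Function

theorem tendstoUniformlyOn_of_abs_sub_le {ι α : Type*} {l : Filter ι} {F : ι → α → ℝ}
    {f : α → ℝ} {s : Set α} {ε : ι → ℝ} (hε : Tendsto ε l (𝓝 0))
    (h : ∀ i, ∀ x ∈ s, |F i x - f x| ≤ ε i) : TendstoUniformlyOn F f l s := by
  rw [Metric.tendstoUniformlyOn_iff]
  intro r hr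
  filter_upwards [hε.eventually_lt_const hr] with i hi x hx
  rw [Real.dist_eq, abs_sub_comm]
  exact (h i x hx).trans_lt hi

theorem TendstoUniformlyOn.mul_of_abs_le {ι α : Type*} {l : Filter ι} {F : ι → α → ℝ}
    {f g : α → ℝ} {s : Set α} {C : ℝ} (h : TendstoUniformlyOn F f l s)
    (hg : ∀ x ∈ s, |g x| ≤ C) :
    TendstoUniformlyOn (fun i x => F i x * g x) (fun x => f x * g x) l s := by
  rw [Metric.tendstoUniformlyOn_iff] at h ⊢
  intro ε hε
  have hC : 0 < |C| + 1 := by positivity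
  filter_upwards [h (ε / (|C| + 1)) (div_pos hε hC)] with i hi x hx
  rw [Real.dist_eq, ← sub_mul, abs_mul, ← Real.dist_eq]
  calc dist (f x) (F i x) * |g x| ≤ dist (f x) (F i x) * (|C| + 1) :=
        mul_le_mul_of_nonneg_left (by linarith [hg x hx, le_abs_self C]) dist_nonneg
    _ < ε / (|C| + 1) * (|C| + 1) := mul_lt_mul_of_pos_right (hi x hx) hC
    _ = ε := div_mul_cancel₀ ε hC.ne'

theorem intervalIntegral_mul_mem_Icc {w f : ℝ → ℝ} {a b m M : ℝ} (hab : a ≤ b)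
    (hw : ContinuousOn w (Icc a b)) (hf : ContinuousOn f (Icc a b))
    (hw₀ : ∀ x ∈ Icc a b, 0 ≤ w x) (hfm : ∀ x ∈ Icc a b, f x ∈ Icc m M) :
    ∫ x in a..b, w x * f x ∈ Icc ((∫ x in a..b, w x) * m) ((∫ x in a..b, w x) * M) := by
  have hwf : IntervalIntegrable (fun x => w x * f x) volume a b :=
    (hw.mul hf).intervalIntegrable_of_Icc hab
  have hwc (c : ℝ) : IntervalIntegrable (fun x => w x * c) volume a b :=
    (hw.mul continuousOn_const).intervalIntegrable_of_Icc hab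
  rw [← intervalIntegral.integral_mul_const, ← intervalIntegral.integral_mul_const]
  exact ⟨intervalIntegral.integral_mono_on hab (hwc m) hwf fun x hx =>
      mul_le_mul_of_nonneg_left (hfm x hx).1 (hw₀ x hx),
    intervalIntegral.integral_mono_on hab hwf (hwc M) fun x hx =>
      mul_le_mul_of_nonneg_left (hfm x hx).2 (hw₀ x hx)⟩

theorem abs_intervalIntegral_sub_mul_le {p q f : ℝ → ℝ} {a b δ m M : ℝ} (hab : a ≤ b)
    (hp : ContinuousOn p (Icc a b)) (hq : ContinuousOn q (Icc a b))
    (hf : ContinuousOn f (Icc a b))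
    (hpδ : ∀ x ∈ Icc a b, δ ≤ p x) (hqδ : ∀ x ∈ Icc a b, δ ≤ q x)
    (hp₁ : ∫ x in a..b, p x = 1) (hq₁ : ∫ x in a..b, q x = 1)
    (hfm : ∀ x ∈ Icc a b, f x ∈ Icc m M) :
    |∫ x in a..b, (p x - q x) * f x| ≤ (1 - δ * (b - a)) * (M - m) := by
  have defect {r : ℝ → ℝ} (hr : ContinuousOn r (Icc a b)) (hr₁ : ∫ x in a..b, r x = 1)
      (hrδ : ∀ x ∈ Icc a b, δ ≤ r x) :
      ∫ x in a..b, (r x - δ) * f x ∈ Icc ((1 - δ * (b - a)) * m) ((1 - δ * (b - a)) * M) := by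
    have hmass : ∫ x in a..b, (r x - δ) = 1 - δ * (b - a) := by
      rw [intervalIntegral.integral_sub (hr.intervalIntegrable_of_Icc hab)
        intervalIntegrable_const, hr₁, intervalIntegral.integral_const, smul_eq_mul, mul_comm]
    rw [← hmass]
    exact intervalIntegral_mul_mem_Icc hab (hr.sub continuousOn_const) hf
      (fun x hx => sub_nonneg.2 (hrδ x hx)) hfm
  have hsplit : ∫ x in a..b, (p x - q x) * f x
      = (∫ x in a..b, (p x - δ) * f x) - ∫ x in a..b, (q x - δ) * f x := by
    have hint {r : ℝ → ℝ} (hr : ContinuousOn r (Icc a b)) :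
        IntervalIntegrable (fun x => (r x - δ) * f x) volume a b :=
      ((hr.sub continuousOn_const).mul hf).intervalIntegrable_of_Icc hab
    rw [← intervalIntegral.integral_sub (hint hp) (hint hq)]
    congr 1 with x
    ring
  have hP := defect hp hp₁ hpδ
  have hQ := defect hq hq₁ hqδ
  rw [hsplit, abs_sub_le_iff]
  constructor <;> linarith [hP.1, hP.2, hQ.1, hQ.2]

theorem le_one_of_le_of_intervalIntegral_eq_one {p : ℝ → ℝ} {δ : ℝ}
    (hp : ContinuousOn p (Icc 0 1)) (hδ : ∀ x ∈ Icc (0:ℝ) 1, δ ≤ p x)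
    (hp₁ : ∫ x in (0:ℝ)..1, p x = 1) : δ ≤ 1 := by
  simpa [hp₁] using intervalIntegral.integral_mono_on zero_le_one intervalIntegrable_const
    (hp.intervalIntegrable_of_Icc (μ := volume) zero_le_one) hδ

theorem tendsto_const_mul_one_sub_pow (c : ℝ) {δ : ℝ} (hδ₀ : 0 < δ) (hδ₁ : δ ≤ 1) :
    Tendsto (fun n => c * (1 - δ) ^ n) atTop (𝓝 0) := by
  simpa using (tendsto_pow_atTop_nhds_zero_of_lt_one (by linarith) (by linarith)).const_mul c

theorem intervalIntegral_intervalIntegral_swap_of_continuous {F : ℝ → ℝ → ℝ}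
    (hF : Continuous (uncurry F)) (a b c d : ℝ) :
    ∫ x in a..b, ∫ y in c..d, F x y = ∫ y in c..d, ∫ x in a..b, F x y :=
  intervalIntegral_intervalIntegral_swap <|
    (hF.continuousOn.integrableOn_compact (isCompact_uIcc.prod isCompact_uIcc)).mono_set
      (prod_mono uIoc_subset_uIcc uIoc_subset_uIcc)

section IteratedKernel

variable {K : ℝ → ℝ → ℝ}

theorem continuous_iterK (hK : Continuous (uncurry K)) (n : ℕ) :
    Continuous (uncurry (iterK K n)) := by
  induction n with
  | zero => exact hK
  | succ n ih =>
    exact intervalIntegral.continuous_parametric_intervalIntegral_of_continuous'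
      ((ih.comp (continuous_fst.fst.prodMk continuous_snd)).mul
        (hK.comp (continuous_snd.prodMk continuous_fst.snd))) 0 1

theorem iterK_succ_eq_integral_mul_iterK (hK : Continuous (uncurry K)) (n : ℕ) (x y : ℝ) :
    iterK K (n + 1) x y = ∫ z in (0:ℝ)..1, K x z * iterK K n z y := by
  induction n generalizing y with
  | zero => rfl
  | succ n ih =>
    calc iterK K (n + 2) x y
        = ∫ z in (0:ℝ)..1, ∫ w in (0:ℝ)..1, K x w * iterK K n w z * K z y := by
          refine intervalIntegral.integral_congr fun z _ => ?_
          simp only [ih, ← intervalIntegral.integral_mul_const]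
      _ = ∫ w in (0:ℝ)..1, ∫ z in (0:ℝ)..1, K x w * iterK K n w z * K z y :=
          have hKn : Continuous fun p : ℝ × ℝ => iterK K n p.1 p.2 := continuous_iterK hK n
          have hK' : Continuous fun p : ℝ × ℝ => K p.1 p.2 := hK
          intervalIntegral_intervalIntegral_swap_of_continuous (by fun_prop) 0 1 0 1
      _ = ∫ w in (0:ℝ)..1, K x w * iterK K (n + 1) w y := by
          refine intervalIntegral.integral_congr fun w _ => ?_
          simp only [iterK, ← intervalIntegral.integral_const_mul, mul_assoc]

theorem integral_iterK (hK : Continuous (uncurry K))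
    (hrow : ∀ x ∈ Icc (0:ℝ) 1, ∫ y in (0:ℝ)..1, K x y = 1) (n : ℕ) :
    ∀ x ∈ Icc (0:ℝ) 1, ∫ y in (0:ℝ)..1, iterK K n x y = 1 := by
  induction n with
  | zero => exact hrow
  | succ n ih =>
    intro x hx
    have hKn : Continuous fun p : ℝ × ℝ => iterK K n p.1 p.2 := continuous_iterK hK n
    have hK' : Continuous fun p : ℝ × ℝ => K p.1 p.2 := hK
    calc ∫ y in (0:ℝ)..1, ∫ z in (0:ℝ)..1, iterK K n x z * K z y
        = ∫ z in (0:ℝ)..1, ∫ y in (0:ℝ)..1, iterK K n x z * K z y :=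
          intervalIntegral_intervalIntegral_swap_of_continuous (by fun_prop) 0 1 0 1
      _ = ∫ z in (0:ℝ)..1, iterK K n x z := by
          refine intervalIntegral.integral_congr fun z hz => ?_
          rw [uIcc_of_le zero_le_one] at hz
          rw [intervalIntegral.integral_const_mul, hrow z hz, mul_one]
      _ = 1 := ih x hx

theorem iterK_nonneg (hK₀ : ∀ x ∈ Icc (0:ℝ) 1, ∀ y ∈ Icc (0:ℝ) 1, 0 ≤ K x y) (n : ℕ) :
    ∀ x ∈ Icc (0:ℝ) 1, ∀ y ∈ Icc (0:ℝ) 1, 0 ≤ iterK K n x y := by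
  induction n with
  | zero => exact hK₀
  | succ n ih =>
    exact fun x hx y hy => intervalIntegral.integral_nonneg zero_le_one fun z hz =>
      mul_nonneg (ih x hx z hz) (hK₀ z hz y hy)

theorem iterK_add_mem_Icc (hK : Continuous (uncurry K))
    (hK₀ : ∀ x ∈ Icc (0:ℝ) 1, ∀ y ∈ Icc (0:ℝ) 1, 0 ≤ K x y)
    (hrow : ∀ x ∈ Icc (0:ℝ) 1, ∫ y in (0:ℝ)..1, K x y = 1) {n : ℕ} {y m M : ℝ}
    (h : ∀ z ∈ Icc (0:ℝ) 1, iterK K n z y ∈ Icc m M) (k : ℕ) :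
    ∀ x ∈ Icc (0:ℝ) 1, iterK K (n + k) x y ∈ Icc m M := by
  induction k with
  | zero => exact h
  | succ k ih =>
    intro x hx
    have := intervalIntegral_mul_mem_Icc zero_le_one (hK.uncurry_left x).continuousOn
      ((continuous_iterK hK (n + k)).uncurry_right y).continuousOn (hK₀ x hx) ih
    rwa [hrow x hx, one_mul, one_mul, ← iterK_succ_eq_integral_mul_iterK hK] at this

theorem abs_iterK_sub_iterK_le {δ C : ℝ} (hK : Continuous (uncurry K))
    (hδ : ∀ x ∈ Icc (0:ℝ) 1, ∀ y ∈ Icc (0:ℝ) 1, δ ≤ K x y)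
    (hrow : ∀ x ∈ Icc (0:ℝ) 1, ∫ y in (0:ℝ)..1, K x y = 1)
    (hC : ∀ x ∈ Icc (0:ℝ) 1, ∀ y ∈ Icc (0:ℝ) 1, K x y ≤ C) (n : ℕ) :
    ∀ x ∈ Icc (0:ℝ) 1, ∀ x' ∈ Icc (0:ℝ) 1, ∀ y ∈ Icc (0:ℝ) 1,
      |iterK K n x y - iterK K n x' y| ≤ (C - δ) * (1 - δ) ^ n := by
  induction n with
  | zero =>
    intro x hx x' hx' y hy
    change |K x y - K x' y| ≤ (C - δ) * (1 - δ) ^ 0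
    rw [pow_zero, mul_one, abs_sub_le_iff]
    exact ⟨by linarith [hC x hx y hy, hδ x' hx' y hy], by linarith [hC x' hx' y hy, hδ x hx y hy]⟩
  | succ n ih =>
    intro x hx x' hx' y hy
    have hKn := (continuous_iterK hK n).uncurry_right y
    obtain ⟨z₀, hz₀, hmin⟩ := isCompact_Icc.exists_isMinOn (nonempty_Icc.2 zero_le_one)
      hKn.continuousOn
    have hosc : ∀ z ∈ Icc (0:ℝ) 1,
        iterK K n z y ∈ Icc (iterK K n z₀ y) (iterK K n z₀ y + (C - δ) * (1 - δ) ^ n) :=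
      fun z hz => ⟨hmin hz, by linarith [(abs_sub_le_iff.1 (ih z hz z₀ hz₀ y hy)).1]⟩
    have hdiff : iterK K (n + 1) x y - iterK K (n + 1) x' y
        = ∫ z in (0:ℝ)..1, (K x z - K x' z) * iterK K n z y := by
      have hint (x : ℝ) : IntervalIntegrable (fun z => K x z * iterK K n z y) volume 0 1 :=
        ((hK.uncurry_left x).mul hKn).intervalIntegrable 0 1
      rw [iterK_succ_eq_integral_mul_iterK hK, iterK_succ_eq_integral_mul_iterK hK,
        ← intervalIntegral.integral_sub (hint x) (hint x')]
      simp only [sub_mul]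
    calc |iterK K (n + 1) x y - iterK K (n + 1) x' y|
        ≤ (1 - δ * (1 - 0)) * (iterK K n z₀ y + (C - δ) * (1 - δ) ^ n - iterK K n z₀ y) := by
          rw [hdiff]
          exact abs_intervalIntegral_sub_mul_le zero_le_one (hK.uncurry_left x).continuousOn
            (hK.uncurry_left x').continuousOn hKn.continuousOn (hδ x hx) (hδ x' hx')
            (hrow x hx) (hrow x' hx') hosc
      _ = (C - δ) * (1 - δ) ^ (n + 1) := by ring

theorem abs_iterK_add_sub_iterK_le {δ C : ℝ} (hK : Continuous (uncurry K)) (hδ₀ : 0 ≤ δ)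
    (hδ : ∀ x ∈ Icc (0:ℝ) 1, ∀ y ∈ Icc (0:ℝ) 1, δ ≤ K x y)
    (hrow : ∀ x ∈ Icc (0:ℝ) 1, ∫ y in (0:ℝ)..1, K x y = 1)
    (hC : ∀ x ∈ Icc (0:ℝ) 1, ∀ y ∈ Icc (0:ℝ) 1, K x y ≤ C) (n k : ℕ) {x x' y : ℝ}
    (hx : x ∈ Icc (0:ℝ) 1) (hx' : x' ∈ Icc (0:ℝ) 1) (hy : y ∈ Icc (0:ℝ) 1) :
    |iterK K (n + k) x y - iterK K n x' y| ≤ (C - δ) * (1 - δ) ^ n := by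
  rw [abs_sub_comm, mem_Icc_iff_abs_le]
  refine iterK_add_mem_Icc hK (fun x hx y hy => hδ₀.trans (hδ x hx y hy)) hrow
    (fun z hz => ?_) k x hx
  exact mem_Icc_iff_abs_le.1 (abs_iterK_sub_iterK_le hK hδ hrow hC n x' hx' z hz y hy)

theorem exists_abs_iterK_sub_le {δ C : ℝ} (hK : Continuous (uncurry K)) (hδ₀ : 0 < δ)
    (hδ : ∀ x ∈ Icc (0:ℝ) 1, ∀ y ∈ Icc (0:ℝ) 1, δ ≤ K x y)
    (hrow : ∀ x ∈ Icc (0:ℝ) 1, ∫ y in (0:ℝ)..1, K x y = 1)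
    (hC : ∀ x ∈ Icc (0:ℝ) 1, ∀ y ∈ Icc (0:ℝ) 1, K x y ≤ C) :
    ∃ u : ℝ → ℝ, ∀ n, ∀ x ∈ Icc (0:ℝ) 1, ∀ y ∈ Icc (0:ℝ) 1,
      |iterK K n x y - u y| ≤ (C - δ) * (1 - δ) ^ n := by
  have h0 : (0:ℝ) ∈ Icc (0:ℝ) 1 := left_mem_Icc.2 zero_le_one
  have hrate := tendsto_const_mul_one_sub_pow (C - δ) hδ₀
    (le_one_of_le_of_intervalIntegral_eq_one (hK.uncurry_left 0).continuousOn (hδ 0 h0) (hrow 0 h0))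
  refine ⟨fun y => limUnder atTop fun n => iterK K n 0 y, fun n x hx y hy => ?_⟩
  have hcauchy : CauchySeq fun n => iterK K n 0 y := by
    refine cauchySeq_of_le_tendsto_0' _ (fun n m hnm => ?_) hrate
    obtain ⟨k, rfl⟩ := Nat.exists_eq_add_of_le hnm
    rw [dist_comm, Real.dist_eq]
    exact abs_iterK_add_sub_iterK_le hK hδ₀.le hδ hrow hC n k h0 h0 hy
  have hlim := (tendsto_nhds_limUnder (cauchySeq_tendsto_of_complete hcauchy)).comp
    (tendsto_add_atTop_nat n)
  rw [abs_sub_comm]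
  refine le_of_tendsto (hlim.sub_const (iterK K n x y)).abs (Eventually.of_forall fun k => ?_)
  simpa only [Function.comp, add_comm k n] using
    abs_iterK_add_sub_iterK_le hK hδ₀.le hδ hrow hC n k h0 hx hy

theorem integral_mul_eq_of_tendstoUniformlyOn_iterK {C x₀ y : ℝ} {u : ℝ → ℝ}
    (hK : Continuous (uncurry K))
    (hu : TendstoUniformlyOn (fun n => iterK K n x₀) u atTop (uIcc 0 1))
    (hy : y ∈ uIcc (0:ℝ) 1) (hC : ∀ x ∈ uIcc (0:ℝ) 1, |K x y| ≤ C) :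
    ∫ x in (0:ℝ)..1, u x * K x y = u y :=
  tendsto_nhds_unique ((hu.mul_of_abs_le hC).tendsto_intervalIntegral_of_continuousOn
      (Eventually.of_forall fun n =>
        (((continuous_iterK hK n).uncurry_left x₀).mul (hK.uncurry_right y)).continuousOn))
    ((hu.tendsto_at hy).comp (tendsto_add_atTop_nat 1))

end IteratedKernel

theorem hostinsky_invariant_density (K : ℝ → ℝ → ℝ) (δ : ℝ)
    (hK : Continuous fun p : ℝ × ℝ => K p.1 p.2) (hδ : 0 < δ)
    (hpos : ∀ x ∈ Set.Icc (0:ℝ) 1, ∀ y ∈ Set.Icc (0:ℝ) 1, δ ≤ K x y)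
    (hrow : ∀ x ∈ Set.Icc (0:ℝ) 1, ∫ y in (0:ℝ)..1, K x y = 1) :
    ∃ u : ℝ → ℝ, ContinuousOn u (Set.Icc 0 1) ∧
      (∀ x ∈ Set.Icc (0:ℝ) 1, 0 ≤ u x) ∧ (∫ x in (0:ℝ)..1, u x) = 1 ∧
      (∀ y ∈ Set.Icc (0:ℝ) 1, ∫ x in (0:ℝ)..1, u x * K x y = u y) ∧
      ∀ ε > (0:ℝ), ∃ N : ℕ, ∀ n ≥ N, ∀ x ∈ Set.Icc (0:ℝ) 1, ∀ y ∈ Set.Icc (0:ℝ) 1,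
        |iterK K n x y - u y| ≤ ε := by
  have hI : uIcc (0:ℝ) 1 = Icc 0 1 := uIcc_of_le zero_le_one
  have h0 : (0:ℝ) ∈ Icc (0:ℝ) 1 := left_mem_Icc.2 zero_le_one
  obtain ⟨C, hC⟩ := (isCompact_Icc.prod isCompact_Icc).exists_bound_of_continuousOn hK.continuousOn
  obtain ⟨u, hu⟩ := exists_abs_iterK_sub_le hK hδ hpos hrow
    fun x hx y hy => (le_abs_self _).trans (hC (x, y) ⟨hx, hy⟩)
  have hrate := tendsto_const_mul_one_sub_pow (C - δ) hδ
    (le_one_of_le_of_intervalIntegral_eq_one (hK.uncurry_left 0).continuousOn (hpos 0 h0)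
      (hrow 0 h0))
  have hunif : TendstoUniformlyOn (fun n => iterK K n 0) u atTop (uIcc 0 1) :=
    tendstoUniformlyOn_of_abs_sub_le hrate fun n y hy => hu n 0 h0 y (hI ▸ hy)
  have hcont (n : ℕ) : ContinuousOn (iterK K n 0) (uIcc 0 1) :=
    ((continuous_iterK hK n).uncurry_left 0).continuousOn
  refine ⟨u, hI ▸ hunif.continuousOn (Frequently.of_forall hcont), fun y hy => ?_, ?_,
    fun y hy => ?_, fun ε hε => ?_⟩
  · exact ge_of_tendsto' (hunif.tendsto_at (hI ▸ hy)) fun n =>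
      iterK_nonneg (fun x hx y hy => hδ.le.trans (hpos x hx y hy)) n 0 h0 y hy
  · refine tendsto_nhds_unique (hunif.tendsto_intervalIntegral_of_continuousOn
      (Eventually.of_forall hcont)) ?_
    simp only [integral_iterK hK hrow _ 0 h0, tendsto_const_nhds]
  · exact integral_mul_eq_of_tendstoUniformlyOn_iterK hK hunif (hI ▸ hy)
      fun x hx => hC (x, y) ⟨hI ▸ hx, hy⟩
  · obtain ⟨N, hN⟩ := eventually_atTop.1 (hrate.eventually_le_const hε)
    exact ⟨N, fun n hn x hx y hy => (hu n x hx y hy).trans (hN n hn)⟩
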